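/- Consider minimizing Σᵢ aᵢ yᵢ² − 2 bᵢ yᵢ subject to Σᵢ yᵢ² = c with c > 0. If y is a global minimizer with Lagrange multiplier λ (so that (aᵢ + λ) yᵢ = bᵢ for all i), then aᵢ + λ ≥ 0 for all i, i.e., λ ≥ −minᵢ aᵢ. -/

import Mathlib

/-!
Under the KKT condition, for every `z` on the sphere `‖z‖² = ‖y‖²` the excess cost
`f z - f y` equals the weighted square `∑ (aᵢ + λ) (zᵢ - yᵢ)²`, so optimality of `y` makes this
quadratic form nonnegative on every chord `z - y` of the sphere. Reflecting `y` in the hyperplane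
orthogonal to `v` shows that every `v` with `⟪y, v⟫ ≠ 0` is (a multiple of) such a chord. Since
`y ≠ 0` these `v` are dense, so the form is nonnegative everywhere; at `v = eᵢ` it is `aᵢ + λ`.
-/

open Finset

theorem Submodule.dense_compl_of_ne_top {M : Type*} [TopologicalSpace M] [AddCommGroup M]
    [ContinuousAdd M] [Module ℝ M] [ContinuousSMul ℝ M] {s : Submodule ℝ M} (hs : s ≠ ⊤) :
    Dense (s : Set M)ᶜ :=
  interior_eq_empty_iff_dense_compl.1 <|
    Set.not_nonempty_iff_eq_empty.1 (mt s.eq_top_of_nonempty_interior' hs)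

section

variable {ι : Type*} [Fintype ι]

theorem sum_quadratic_sub_eq_sum_mul_sub_sq {a b y z : ι → ℝ} {lam : ℝ}
    (hKKT : ∀ i, (a i + lam) * y i = b i) (hz : ∑ i, z i ^ 2 = ∑ i, y i ^ 2) :
    ∑ i, (a i * z i ^ 2 - 2 * b i * z i) - ∑ i, (a i * y i ^ 2 - 2 * b i * y i) =
      ∑ i, (a i + lam) * (z i - y i) ^ 2 := by
  have h (i : ι) : (a i + lam) * (z i - y i) ^ 2 =
      (a i * z i ^ 2 - 2 * b i * z i) - (a i * y i ^ 2 - 2 * b i * y i) +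
        lam * (z i ^ 2 - y i ^ 2) := by
    rw [← hKKT i]; ring
  simp only [h, sum_add_distrib, sum_sub_distrib, ← mul_sum, hz, sub_self, mul_zero, add_zero]

theorem sum_sq_add_smul (y v : ι → ℝ) (s : ℝ) :
    ∑ i, (y i + s * v i) ^ 2 = ∑ i, y i ^ 2 + s * (2 * y ⬝ᵥ v + s * ∑ i, v i ^ 2) := by
  simp only [dotProduct, mul_add, mul_sum, ← sum_add_distrib]
  exact sum_congr rfl fun i _ => by ring

theorem exists_ne_zero_sum_sq_add_smul_eq {y v : ι → ℝ} (hv : y ⬝ᵥ v ≠ 0) :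
    ∃ s ≠ 0, ∑ i, (y i + s * v i) ^ 2 = ∑ i, y i ^ 2 := by
  have hv₀ : ∑ i, v i ^ 2 ≠ 0 := by
    intro h
    have : v = 0 := funext fun i => pow_eq_zero_iff two_ne_zero |>.1 <|
      (sum_eq_zero_iff_of_nonneg fun i _ => sq_nonneg (v i)).1 h i (mem_univ i)
    exact hv (by simp [this])
  -- `y + s • v` is the reflection of `y` in the hyperplane orthogonal to `v`.
  refine ⟨-2 * (y ⬝ᵥ v) / ∑ i, v i ^ 2, by simp [hv, hv₀], ?_⟩
  rw [sum_sq_add_smul, div_mul_cancel₀ _ hv₀]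
  ring

theorem nonneg_weighted_sum_sq_of_dotProduct_ne_zero {w y v : ι → ℝ}
    (h : ∀ z : ι → ℝ, ∑ i, z i ^ 2 = ∑ i, y i ^ 2 → 0 ≤ ∑ i, w i * (z i - y i) ^ 2)
    (hv : y ⬝ᵥ v ≠ 0) : 0 ≤ ∑ i, w i * v i ^ 2 := by
  obtain ⟨s, hs, hz⟩ := exists_ne_zero_sum_sq_add_smul_eq hv
  have hchord := h _ hz
  simp only [add_sub_cancel_left, mul_pow, mul_left_comm (w _), ← mul_sum] at hchord
  exact nonneg_of_mul_nonneg_right hchord (by positivity)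

theorem nonneg_of_forall_dotProduct_ne_zero {f : (ι → ℝ) → ℝ} {y : ι → ℝ} (hf : Continuous f)
    (hy : y ≠ 0) (h : ∀ v, y ⬝ᵥ v ≠ 0 → 0 ≤ f v) (v : ι → ℝ) : 0 ≤ f v := by
  have hker : LinearMap.ker (dotProductBilin ℝ ℝ y) ≠ ⊤ := by
    intro htop
    have : y ⬝ᵥ y = 0 := by simpa using LinearMap.congr_fun (LinearMap.ker_eq_top.1 htop) y
    exact hy (dotProduct_self_eq_zero.1 this)
  exact (Submodule.dense_compl_of_ne_top hker).induction h
    (isClosed_le continuous_const hf) v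

end

/-- Second-order necessary condition: if `y` globally minimizes
`Σ aᵢyᵢ² - 2bᵢyᵢ` over the sphere `Σ yᵢ² = c` (`c > 0`) and satisfies the
first-order KKT condition `(aᵢ + λ) yᵢ = bᵢ` with multiplier `λ`, then
`aᵢ + λ ≥ 0` for all `i`. -/
theorem second_order_necessary {N : ℕ} (a b : Fin N → ℝ) (c : ℝ) (hc : 0 < c)
    (y : Fin N → ℝ) (lam : ℝ)
    (hfeas : ∑ i, (y i) ^ 2 = c)
    (hopt : ∀ z : Fin N → ℝ, ∑ i, (z i) ^ 2 = c →
      ∑ i, (a i * (y i) ^ 2 - 2 * b i * y i) ≤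
        ∑ i, (a i * (z i) ^ 2 - 2 * b i * z i))
    (hKKT : ∀ i, (a i + lam) * y i = b i) :
    ∀ i, 0 ≤ a i + lam := by
  intro i
  have hy : y ≠ 0 := by
    rintro rfl
    simp [← hfeas] at hc
  have hchord (z : Fin N → ℝ) (hz : ∑ i, z i ^ 2 = ∑ i, y i ^ 2) :
      0 ≤ ∑ i, (a i + lam) * (z i - y i) ^ 2 := by
    rw [← sum_quadratic_sub_eq_sum_mul_sub_sq hKKT hz, sub_nonneg]
    exact hopt z (hz.trans hfeas)
  simpa [Pi.single_apply, ite_pow] using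
    nonneg_of_forall_dotProduct_ne_zero (by fun_prop) hy
      (fun v hv => nonneg_weighted_sum_sq_of_dotProduct_ne_zero hchord hv) (Pi.single i 1)
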